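/- Full correctness of the ESL algorithm: let G be a game with integer weights and let G₀ = G, φ_j = En⁺_{G_j}, G_{j+1} = (G_j)_{φ_j}, Φ_j = φ₀ + ⋯ + φ_{j−1}. Suppose Φ_{j+1} = Φ_j. Then for every vertex v ∈ V: En_G(v) < ∞ if and only if En_{G_j}(v) = 0, and in that case En_G(v) = Φ_j(v). -/

import Mathlib

attribute [local instance] Classical.propDecidable

/-- A game: a directed graph `E` on vertex set `V` with no sink, edge weights `wt : V → V → R`,
and a partition of the vertices into those belonging to Min (`isMin`) and to Max (the rest). -/
structure Game (V : Type) (R : Type) where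
  E : V → V → Prop
  wt : V → V → R
  isMin : V → Prop
  nosink : ∀ v, ∃ u, E v u

namespace Game

variable {V : Type} {R : Type}

/-- A strategy for Min: a choice of an outgoing edge at every Min vertex. -/
def MinStrat (G : Game V R) : Type := {σ : V → V // ∀ v, G.isMin v → G.E v (σ v)}

/-- A strategy for Max: a choice of an outgoing edge at every Max vertex. -/
def MaxStrat (G : Game V R) : Type := {τ : V → V // ∀ v, ¬ G.isMin v → G.E v (τ v)}

/-- An infinite path in the graph. -/
def IsPath (G : Game V R) (π : ℕ → V) : Prop := ∀ i, G.E (π i) (π (i + 1))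

/-- Consistency of an infinite path with a Min strategy. -/
def ConsMin (G : Game V R) (σ : G.MinStrat) (π : ℕ → V) : Prop :=
  ∀ i, G.isMin (π i) → π (i + 1) = σ.1 (π i)

/-- Consistency of an infinite path with a Max strategy. -/
def ConsMax (G : Game V R) (τ : G.MaxStrat) (π : ℕ → V) : Prop :=
  ∀ i, ¬ G.isMin (π i) → π (i + 1) = τ.1 (π i)

/-- Infinite paths starting in `v` consistent with the Min strategy `σ`. -/
def PlaysMin (G : Game V R) (σ : G.MinStrat) (v : V) : Type :=
  {π : ℕ → V // π 0 = v ∧ G.IsPath π ∧ G.ConsMin σ π}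

/-- Infinite paths starting in `v` consistent with the Max strategy `τ`. -/
def PlaysMax (G : Game V R) (τ : G.MaxStrat) (v : V) : Type :=
  {π : ℕ → V // π 0 = v ∧ G.IsPath π ∧ G.ConsMax τ π}

/-- The sequence of weights along an infinite path. -/
def wseq (G : Game V R) (π : ℕ → V) : ℕ → R := fun i => G.wt (π i) (π (i + 1))

/-- Embedding of `ℤ ∪ {∞}` into the extended reals. -/
noncomputable def toE (x : WithTop ℤ) : EReal :=
  if h : x = ⊤ then ⊤ else (((x.untop h : ℤ) : ℝ) : EReal)

/-- Embedding of `ℕ ∪ {∞}` into the extended reals. -/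
noncomputable def enatToE (x : ENat) : EReal :=
  if x = ⊤ then ⊤ else ((x.toNat : ℝ) : EReal)

/-- Conversion `ℤ ∪ {∞} → ℕ ∪ {∞}` (exact on non-negative values). -/
noncomputable def wToN (x : WithTop ℤ) : ENat :=
  if h : x = ⊤ then ⊤ else ((x.untop h).toNat : ENat)

/-- The mean-payoff valuation `MP(w₀w₁⋯) = limsup_k (1/k) ∑_{i<k} w_i`. -/
noncomputable def MPv (w : ℕ → ℤ) : EReal :=
  Filter.limsup
    (fun k : ℕ => ((((∑ i ∈ Finset.range k, w i : ℤ) : ℝ) / (k : ℝ) : ℝ) : EReal))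
    Filter.atTop

/-- The energy valuation `En(w₀w₁⋯) = sup_k ∑_{i<k} w_i` (weights given in `EReal`). -/
noncomputable def En (w : ℕ → EReal) : EReal :=
  ⨆ k : ℕ, ∑ i ∈ Finset.range k, w i

/-- The positive-energy valuation `En⁺(w₀w₁⋯) = ∑_{i<k¬} w_i ∈ ℕ ∪ {∞}` where `k¬` is the
first index of a negative weight (the whole, possibly infinite, sum if no weight is negative). -/
noncomputable def EnP (w : ℕ → WithTop ℤ) : ENat :=
  if h : ∃ k, w k < 0 then ∑ i ∈ Finset.range (Nat.find h), wToN (w i)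
  else ⨆ k : ℕ, ∑ i ∈ Finset.range k, wToN (w i)

/-- The mean-payoff value of a vertex:
`MP_G(v) = inf over Min strategies σ of sup over plays π from v consistent with σ of MP(w(π))`. -/
noncomputable def MPVal (G : Game V ℤ) (v : V) : EReal :=
  ⨅ σ : G.MinStrat, ⨆ π : G.PlaysMin σ v, MPv (G.wseq π.1)

/-- The energy value of a vertex. -/
noncomputable def EnVal (G : Game V (WithTop ℤ)) (v : V) : EReal :=
  ⨅ σ : G.MinStrat, ⨆ π : G.PlaysMin σ v, En (fun i => toE (G.wseq π.1 i))

/-- The positive-energy value of a vertex. -/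
noncomputable def EnPVal (G : Game V (WithTop ℤ)) (v : V) : ENat :=
  ⨅ σ : G.MinStrat, ⨆ π : G.PlaysMin σ v, EnP (G.wseq π.1)

/-- Lift a game with integer weights to a game with weights in `ℤ ∪ {∞}`. -/
def liftZ (G : Game V ℤ) : Game V (WithTop ℤ) :=
  { E := G.E, wt := fun u v => (G.wt u v : WithTop ℤ), isMin := G.isMin, nosink := G.nosink }

/-- The `φ`-modified weight: `w_φ(v,v') = w(v,v') + φ(v') − φ(v)` when `w(v,v')`, `φ(v)`, `φ(v')`
are all finite, and `∞` otherwise. -/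
noncomputable def modWt (w : V → V → WithTop ℤ) (φ : V → ENat) (u v : V) : WithTop ℤ :=
  if w u v = ⊤ ∨ φ u = ⊤ ∨ φ v = ⊤ then ⊤
  else (((w u v).untopD 0 + ((φ v).toNat : ℤ) - ((φ u).toNat : ℤ) : ℤ) : WithTop ℤ)

/-- The `φ`-modified game `G_φ`. -/
noncomputable def modify (G : Game V (WithTop ℤ)) (φ : V → ENat) : Game V (WithTop ℤ) :=
  { G with wt := modWt G.wt φ }

/-- `π 0 → π 1 → ⋯ → π k` is a simple cycle: `k ≥ 1`, consecutive edges, `π k = π 0`,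
and `π 0, …, π (k-1)` pairwise distinct. -/
def IsSimpleCycle (G : Game V R) (π : ℕ → V) (k : ℕ) : Prop :=
  1 ≤ k ∧ (∀ i < k, G.E (π i) (π (i + 1))) ∧ π k = π 0 ∧
    ∀ i < k, ∀ j < k, π i = π j → i = j

/-- A game is simple if every simple cycle has nonzero sum of weights. -/
def IsSimpleR [AddCommMonoid R] (G : Game V R) : Prop :=
  ∀ π k, IsSimpleCycle G π k → (∑ i ∈ Finset.range k, G.wt (π i) (π (i + 1))) ≠ 0

/-- `W = max_{e ∈ E} |w(e)|`. -/
noncomputable def maxW (G : Game V ℤ) [Fintype V] : ℕ :=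
  Finset.sup Finset.univ (fun p : V × V => if G.E p.1 p.2 then (G.wt p.1 p.2).natAbs else 0)

/-- The ESL iteration: `G₀ = G` and `G_{j+1} = (G_j)_{φ_j}` where `φ_j = En⁺_{G_j}`. -/
noncomputable def esl (G : Game V (WithTop ℤ)) : ℕ → Game V (WithTop ℤ)
  | 0 => G
  | j + 1 => modify (esl G j) (EnPVal (esl G j))

/-- The accumulated ESL potential `Φ_j = φ₀ + ⋯ + φ_{j−1}`. -/
noncomputable def eslPhi (G : Game V (WithTop ℤ)) (j : ℕ) (v : V) : ENat :=
  ∑ i ∈ Finset.range j, EnPVal (esl G i) v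

/-- The set of vertices from which Min can ensure to immediately visit a negative-weight edge:
Min vertices with some negative outgoing edge, and Max vertices all of whose outgoing edges
are negative. -/
def NegSet (G : Game V (WithTop ℤ)) : Set V :=
  {v | (G.isMin v ∧ ∃ u, G.E v u ∧ G.wt v u < 0) ∨
       (¬ G.isMin v ∧ ∀ u, G.E v u → G.wt v u < 0)}

end Game

open Game

/-!
Shifting the weights of a game `H` by a potential `φ` with `φ ≤ En_H` shifts the energy values
by exactly `φ`: along a play the shifted prefix sums telescope to the original ones plus
`φ(v) - φ(current vertex)`, and `φ` at the current vertex is at most the energy Min still has to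
concede from there. Iterated shifts compose, so `G_j = G_{Φ_j}`, and since `En⁺ ≤ En` induction
gives `Φ_j ≤ En_G`, hence `En_G = En_{G_j} + Φ_j`. At a fixed point `En⁺_{G_j}` vanishes wherever
`Φ_j` is finite; there Min can always take a nonpositive, hence finite, edge and Max has no
positive one, so these vertices form a trap of `G_j` with energy `0`. Where `Φ_j = ∞` both
`En_G` and `En_{G_j}` are infinite.
-/

open Finset
open scoped ENNReal

namespace EReal

lemma iSup_add_le {ι : Sort*} {f : ι → EReal} {b c : EReal} (h : ∀ i, f i + b ≤ c) :
    (⨆ i, f i) + b ≤ c :=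
  add_le_of_forall_lt fun a ha b' hb' => by
    obtain ⟨i, hi⟩ := lt_iSup_iff.1 ha
    exact (add_le_add hi.le hb'.le).trans (h i)

lemma iInf_add {ι : Sort*} (f : ι → EReal) {b : EReal} (hf : ⨅ i, f i ≠ ⊥) (hb : b ≠ ⊥) :
    (⨅ i, f i) + b = ⨅ i, (f i + b) :=
  le_antisymm (le_iInf fun i => add_le_add_left (iInf_le f i) b)
    (le_add_of_forall_gt (.inl hf) (.inr hb) fun a ha b' hb' => by
      obtain ⟨i, hi⟩ := iInf_lt_iff.1 ha
      exact (iInf_le _ i).trans (add_le_add hi.le hb'.le))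

end EReal

namespace Game

variable {V : Type}

lemma toE_top : toE ⊤ = ⊤ := dif_pos rfl

lemma toE_coe (n : ℤ) : toE n = ((n : ℝ) : EReal) := by
  simp [toE]

lemma toE_ne_bot (x : WithTop ℤ) : toE x ≠ ⊥ := by
  induction x using WithTop.recTopCoe with
  | top => simp [toE_top]
  | coe n => simp [toE_coe]

lemma toE_nonpos {x : WithTop ℤ} (hx : x ≤ 0) : toE x ≤ 0 := by
  induction x using WithTop.recTopCoe with
  | top => exact absurd hx (by simp)
  | coe n => rw [toE_coe]; exact_mod_cast (WithTop.coe_le_coe.1 hx : n ≤ 0)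

lemma wToN_eq_zero_iff {x : WithTop ℤ} : wToN x = 0 ↔ x ≤ 0 := by
  induction x using WithTop.recTopCoe with
  | top => simp [wToN]
  | coe n => simp [wToN]

lemma enatToE_eq_coe (x : ℕ∞) : enatToE x = ((x : ℝ≥0∞) : EReal) := by
  induction x using ENat.recTopCoe with
  | top => simp [enatToE]
  | coe n =>
    simp only [enatToE, ENat.natCast_ne_top, if_false, ENat.toNat_natCast, EReal.coe_natCast,
      ENat.toENNReal_coe]
    rfl

lemma enatToE_top : enatToE ⊤ = ⊤ := by simp [enatToE_eq_coe]

lemma enatToE_lt_top {x : ℕ∞} (hx : x ≠ ⊤) : enatToE x < ⊤ := by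
  rw [enatToE, if_neg hx]
  exact EReal.coe_lt_top _

lemma enatToE_ne_bot (x : ℕ∞) : enatToE x ≠ ⊥ := by
  simp [enatToE_eq_coe]

lemma enatToE_nonneg (x : ℕ∞) : 0 ≤ enatToE x := by
  simpa [enatToE_eq_coe] using EReal.coe_ennreal_nonneg _

lemma enatToE_add (x y : ℕ∞) : enatToE (x + y) = enatToE x + enatToE y := by
  simp [enatToE_eq_coe, EReal.coe_ennreal_add]

lemma enatToE_le_enatToE {x y : ℕ∞} (h : x ≤ y) : enatToE x ≤ enatToE y := by
  simpa [enatToE_eq_coe] using ENat.toENNReal_le.2 h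

lemma enatToE_wToN {x : WithTop ℤ} (hx : 0 ≤ x) : enatToE (wToN x) = toE x := by
  induction x using WithTop.recTopCoe with
  | top => simp [wToN, toE_top, enatToE_top]
  | coe n =>
    have hn : 0 ≤ n := WithTop.coe_le_coe.1 hx
    simp [wToN, toE_coe, enatToE]
    exact_mod_cast Int.toNat_of_nonneg hn

lemma enatToE_iSup_le {ι : Sort*} {f : ι → ℕ∞} {b : EReal} (hb : 0 ≤ b)
    (h : ∀ i, enatToE (f i) ≤ b) : enatToE (⨆ i, f i) ≤ b := by
  have key : ∀ i, (f i : ℝ≥0∞) ≤ b.toENNReal := fun i => by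
    simpa [EReal.toENNReal_coe, enatToE_eq_coe] using EReal.toENNReal_le_toENNReal (h i)
  rw [enatToE_eq_coe, ENat.toENNReal_iSup, ← EReal.coe_toENNReal hb]
  exact EReal.coe_ennreal_le_coe_ennreal_iff.2 (iSup_le key)

lemma sum_range_le_En (w : ℕ → EReal) (k : ℕ) : ∑ i ∈ range k, w i ≤ En w :=
  le_iSup (fun k => ∑ i ∈ range k, w i) k

lemma En_nonneg (w : ℕ → EReal) : 0 ≤ En w := by
  simpa using sum_range_le_En w 0

lemma enatToE_sum_wToN {w : ℕ → WithTop ℤ} {k : ℕ} (hw : ∀ i < k, 0 ≤ w i) :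
    enatToE (∑ i ∈ range k, wToN (w i)) = ∑ i ∈ range k, toE (w i) := by
  induction k with
  | zero => simp [enatToE_eq_coe]
  | succ k ih =>
    rw [sum_range_succ, sum_range_succ, enatToE_add, ih fun i hi => hw i (by omega),
      enatToE_wToN (hw k (by omega))]

lemma enatToE_EnP_le_En (w : ℕ → WithTop ℤ) : enatToE (EnP w) ≤ En (fun i => toE (w i)) := by
  unfold EnP
  split_ifs with hneg
  · rw [enatToE_sum_wToN fun i hi => not_lt.1 (Nat.find_min hneg hi)]
    exact sum_range_le_En _ _
  · simp only [not_exists, not_lt] at hneg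
    exact enatToE_iSup_le (En_nonneg _) fun k =>
      (enatToE_sum_wToN fun i _ => hneg i).trans_le (sum_range_le_En _ k)

lemma nonpos_of_EnP_eq_zero {w : ℕ → WithTop ℤ} (h : EnP w = 0) : w 0 ≤ 0 := by
  unfold EnP at h
  split_ifs at h with hneg
  · by_cases h0 : Nat.find hneg = 0
    · exact (h0 ▸ Nat.find_spec hneg).le
    · exact wToN_eq_zero_iff.1 (sum_eq_zero_iff.1 h 0 (mem_range.2 (Nat.pos_of_ne_zero h0)))
  · refine wToN_eq_zero_iff.1 (le_antisymm ?_ bot_le)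
    simpa [h] using le_iSup (fun k => ∑ i ∈ range k, wToN (w i)) 1

section Plays

variable {R : Type} {H : Game V R}

noncomputable def MinStrat.next (σ : H.MinStrat) (u : V) : V :=
  if H.isMin u then σ.1 u else (H.nosink u).choose

lemma MinStrat.edge_next (σ : H.MinStrat) (u : V) : H.E u (σ.next u) := by
  unfold MinStrat.next
  split_ifs with hu
  · exact σ.2 u hu
  · exact (H.nosink u).choose_spec

instance (σ : H.MinStrat) (v : V) : Nonempty (H.PlaysMin σ v) :=
  ⟨⟨fun k => σ.next^[k] v, rfl,
    fun i => by simpa only [Function.iterate_succ_apply'] using σ.edge_next _,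
    fun i hi => by simp only [Function.iterate_succ_apply', MinStrat.next, if_pos hi]⟩⟩

lemma exists_play_of_edge (σ : H.MinStrat) {u u' : V} (hE : H.E u u')
    (hσ : H.isMin u → u' = σ.1 u) : ∃ π : H.PlaysMin σ u, π.1 1 = u' := by
  obtain ⟨ρ⟩ : Nonempty (H.PlaysMin σ u') := inferInstance
  refine ⟨⟨fun k => match k with | 0 => u | k + 1 => ρ.1 k, rfl, ?_, ?_⟩, ρ.2.1⟩
  · rintro (_ | i)
    · exact (congrArg (H.E u) ρ.2.1).mpr hE
    · exact ρ.2.2.1 i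
  · rintro (_ | i) hi
    · exact ρ.2.1.trans (hσ hi)
    · exact ρ.2.2.2 i hi

lemma exists_play_append {σ : H.MinStrat} {v : V} (π : H.PlaysMin σ v) (k : ℕ)
    (ρ : H.PlaysMin σ (π.1 k)) :
    ∃ χ : H.PlaysMin σ v, (∀ i ≤ k, χ.1 i = π.1 i) ∧ ∀ m, χ.1 (k + m) = ρ.1 m := by
  set χ : ℕ → V := fun i => if i < k then π.1 i else ρ.1 (i - k)
  have hπ : ∀ i ≤ k, χ i = π.1 i := fun i hi => by
    rcases hi.lt_or_eq with hi | rfl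
    · simp [χ, hi]
    · simpa [χ] using ρ.2.1
  have hρ : ∀ m, χ (k + m) = ρ.1 m := fun m => by simp [χ]
  have hstep : ∀ i, (χ i = π.1 i ∧ χ (i + 1) = π.1 (i + 1)) ∨
      ∃ m, χ i = ρ.1 m ∧ χ (i + 1) = ρ.1 (m + 1) := fun i => by
    rcases lt_or_ge i k with hi | hi
    · exact .inl ⟨hπ i hi.le, hπ (i + 1) hi⟩
    · obtain ⟨m, rfl⟩ := Nat.exists_eq_add_of_le hi
      exact .inr ⟨m, hρ m, hρ (m + 1)⟩
  refine ⟨⟨χ, (hπ 0 (Nat.zero_le k)).trans π.2.1, fun i => ?_, fun i => ?_⟩, hπ, hρ⟩ <;>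
    rcases hstep i with ⟨h, h'⟩ | ⟨m, h, h'⟩ <;> rw [h, h']
  · exact π.2.2.1 i
  · exact ρ.2.2.1 m
  · exact π.2.2.2 i
  · exact ρ.2.2.2 m

end Plays

section Values

variable (H : Game V (WithTop ℤ))

noncomputable def partialEn (π : ℕ → V) (k : ℕ) : EReal := ∑ i ∈ range k, toE (H.wseq π i)

noncomputable def EnValOf (σ : H.MinStrat) (v : V) : EReal :=
  ⨆ π : H.PlaysMin σ v, ⨆ k, H.partialEn π.1 k

lemma partialEn_succ (π : ℕ → V) (k : ℕ) :
    H.partialEn π (k + 1) = H.partialEn π k + toE (H.wt (π k) (π (k + 1))) :=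
  sum_range_succ _ _

lemma partialEn_ne_bot (π : ℕ → V) (k : ℕ) : H.partialEn π k ≠ ⊥ :=
  sum_induction _ (· ≠ ⊥) (fun _ _ ha hb => EReal.add_ne_bot_iff.2 ⟨ha, hb⟩) (by simp)
    fun i _ => toE_ne_bot _

variable {H}

lemma partialEn_le_EnValOf {σ : H.MinStrat} {v : V} (π : H.PlaysMin σ v) (k : ℕ) :
    H.partialEn π.1 k ≤ H.EnValOf σ v :=
  le_iSup_of_le π (le_iSup (fun k => H.partialEn π.1 k) k)

lemma EnVal_eq_iInf (v : V) : EnVal H v = ⨅ σ, H.EnValOf σ v := rfl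

lemma EnVal_le_EnValOf (σ : H.MinStrat) (v : V) : EnVal H v ≤ H.EnValOf σ v :=
  iInf_le (fun σ => H.EnValOf σ v) σ

lemma EnValOf_nonneg (σ : H.MinStrat) (v : V) : 0 ≤ H.EnValOf σ v := by
  obtain ⟨π⟩ : Nonempty (H.PlaysMin σ v) := inferInstance
  simpa [partialEn] using partialEn_le_EnValOf π 0

lemma EnVal_nonneg (v : V) : 0 ≤ EnVal H v :=
  le_iInf fun σ => EnValOf_nonneg σ v

lemma enatToE_EnPVal_le_EnVal (v : V) : enatToE (EnPVal H v) ≤ EnVal H v :=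
  le_iInf fun σ => (enatToE_le_enatToE (iInf_le _ σ)).trans <|
    enatToE_iSup_le (EnValOf_nonneg σ v) fun π =>
      (enatToE_EnP_le_En _).trans (le_iSup (fun π : H.PlaysMin σ v => ⨆ k, H.partialEn π.1 k) π)

lemma partialEn_add_EnValOf_le {σ : H.MinStrat} {v : V} (π : H.PlaysMin σ v) (k : ℕ) :
    H.partialEn π.1 k + H.EnValOf σ (π.1 k) ≤ H.EnValOf σ v := by
  rw [add_comm]
  refine EReal.iSup_add_le fun ρ => EReal.iSup_add_le fun m => ?_
  obtain ⟨χ, hπ, hρ⟩ := exists_play_append π k ρ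
  have hsplit : H.partialEn χ.1 (k + m) = H.partialEn π.1 k + H.partialEn ρ.1 m := by
    rw [partialEn, sum_range_add]
    congr 1
    · refine sum_congr rfl fun i hi => ?_
      rw [mem_range] at hi
      simp only [wseq, hπ i hi.le, hπ (i + 1) hi]
    · refine sum_congr rfl fun i _ => ?_
      rw [wseq, wseq, hρ, add_assoc, hρ]
  rw [add_comm, ← hsplit]
  exact partialEn_le_EnValOf χ (k + m)

end Values

section ModWt

variable (w : V → V → WithTop ℤ) (φ : V → ℕ∞)

lemma modWt_eq_top_iff {u u' : V} :
    modWt w φ u u' = ⊤ ↔ w u u' = ⊤ ∨ φ u = ⊤ ∨ φ u' = ⊤ := by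
  unfold modWt
  split_ifs with h <;> simp [h]

lemma toE_modWt_add_enatToE {u u' : V} (h : modWt w φ u u' ≠ ⊤) :
    toE (modWt w φ u u') + enatToE (φ u) = toE (w u u') + enatToE (φ u') := by
  simp only [ne_eq, modWt_eq_top_iff, not_or] at h
  obtain ⟨hw, hu, hu'⟩ := h
  obtain ⟨a, ha⟩ := WithTop.ne_top_iff_exists.1 hw
  rw [modWt, if_neg (by simp [hw, hu, hu']), ← ha, WithTop.untopD_coe, toE_coe, toE_coe,
    enatToE, if_neg hu, enatToE, if_neg hu']
  norm_cast
  ring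

lemma toE_add_enatToE_le_modWt (u u' : V) :
    toE (w u u') + enatToE (φ u') ≤ toE (modWt w φ u u') + enatToE (φ u) := by
  by_cases h : modWt w φ u u' = ⊤
  · rw [h, toE_top, EReal.top_add_of_ne_bot (enatToE_ne_bot _)]
    exact le_top
  · exact (toE_modWt_add_enatToE w φ h).ge

end ModWt

section Potential

variable (H : Game V (WithTop ℤ)) (φ : V → ℕ∞)

lemma partialEn_add_le_partialEn_modify (π : ℕ → V) (k : ℕ) :
    H.partialEn π k + enatToE (φ (π k)) ≤ (H.modify φ).partialEn π k + enatToE (φ (π 0)) := by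
  induction k with
  | zero => simp [partialEn]
  | succ k ih =>
    calc H.partialEn π (k + 1) + enatToE (φ (π (k + 1)))
        = H.partialEn π k + (toE (H.wt (π k) (π (k + 1))) + enatToE (φ (π (k + 1)))) := by
          rw [partialEn_succ, add_assoc]
      _ ≤ H.partialEn π k + (toE (modWt H.wt φ (π k) (π (k + 1))) + enatToE (φ (π k))) :=
          add_le_add le_rfl (toE_add_enatToE_le_modWt _ _ _ _)
      _ = (H.partialEn π k + enatToE (φ (π k))) + toE (modWt H.wt φ (π k) (π (k + 1))) := by
          abel
      _ ≤ ((H.modify φ).partialEn π k + enatToE (φ (π 0)))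
            + toE (modWt H.wt φ (π k) (π (k + 1))) := add_le_add ih le_rfl
      _ = (H.modify φ).partialEn π (k + 1) + enatToE (φ (π 0)) := by
          rw [partialEn_succ]
          exact add_right_comm _ _ _

lemma partialEn_modify_le_or_exists_eq_top (π : ℕ → V) (k : ℕ) :
    (H.modify φ).partialEn π k + enatToE (φ (π 0)) ≤ H.partialEn π k + enatToE (φ (π k)) ∨
      ∃ i ≤ k, H.partialEn π i + enatToE (φ (π i)) = ⊤ := by
  induction k with
  | zero => simp [partialEn]
  | succ k ih =>
    refine ih.elim (fun ih => ?_) fun ⟨i, hi, htop⟩ => .inr ⟨i, hi.trans k.le_succ, htop⟩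
    by_cases hw : modWt H.wt φ (π k) (π (k + 1)) = ⊤
    · right
      have hfin : ∀ i, H.partialEn π i ≠ ⊥ := H.partialEn_ne_bot π
      rcases (modWt_eq_top_iff _ _).1 hw with hw | hu | hu
      · refine ⟨k + 1, le_rfl, ?_⟩
        rw [partialEn_succ, hw, toE_top, EReal.add_top_of_ne_bot (hfin k),
          EReal.top_add_of_ne_bot (enatToE_ne_bot _)]
      · exact ⟨k, k.le_succ, by rw [hu, enatToE_top, EReal.add_top_of_ne_bot (hfin k)]⟩
      · exact ⟨k + 1, le_rfl, by rw [hu, enatToE_top, EReal.add_top_of_ne_bot (hfin _)]⟩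
    · left
      calc (H.modify φ).partialEn π (k + 1) + enatToE (φ (π 0))
          = ((H.modify φ).partialEn π k + enatToE (φ (π 0)))
              + toE (modWt H.wt φ (π k) (π (k + 1))) := by
            rw [partialEn_succ]
            exact add_right_comm _ _ _
        _ ≤ (H.partialEn π k + enatToE (φ (π k))) + toE (modWt H.wt φ (π k) (π (k + 1))) :=
            add_le_add ih le_rfl
        _ = H.partialEn π k + (toE (modWt H.wt φ (π k) (π (k + 1))) + enatToE (φ (π k))) := by
            abel
        _ = H.partialEn π (k + 1) + enatToE (φ (π (k + 1))) := by
            rw [toE_modWt_add_enatToE _ _ hw, partialEn_succ, add_assoc]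

variable {H φ}

lemma EnValOf_modify_add (hφ : ∀ u, enatToE (φ u) ≤ EnVal H u) (σ : H.MinStrat) (v : V) :
    (H.modify φ).EnValOf σ v + enatToE (φ v) = H.EnValOf σ v := by
  apply le_antisymm
  · refine EReal.iSup_add_le fun π => EReal.iSup_add_le fun k => ?_
    have hbound : ∀ i, H.partialEn π.1 i + enatToE (φ (π.1 i)) ≤ H.EnValOf σ v := fun i =>
      (add_le_add le_rfl ((hφ _).trans (EnVal_le_EnValOf σ _))).trans
        (partialEn_add_EnValOf_le (H := H) π i)
    rw [← congrArg φ π.2.1]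
    rcases partialEn_modify_le_or_exists_eq_top H φ π.1 k with h | ⟨i, -, h⟩
    · exact h.trans (hbound k)
    · exact le_top.trans (h ▸ hbound i)
  · refine iSup_le fun π => iSup_le fun k => ?_
    calc H.partialEn π.1 k
        ≤ H.partialEn π.1 k + enatToE (φ (π.1 k)) := le_add_of_nonneg_right (enatToE_nonneg _)
      _ ≤ (H.modify φ).partialEn π.1 k + enatToE (φ v) :=
          congrArg φ π.2.1 ▸ partialEn_add_le_partialEn_modify H φ π.1 k
      _ ≤ (H.modify φ).EnValOf σ v + enatToE (φ v) :=
          add_le_add (partialEn_le_EnValOf (H := H.modify φ) π k) le_rfl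

lemma EnVal_modify_add (hφ : ∀ u, enatToE (φ u) ≤ EnVal H u) (v : V) :
    EnVal (H.modify φ) v + enatToE (φ v) = EnVal H v := by
  have hne : EnVal (H.modify φ) v ≠ ⊥ := ((EnVal_nonneg v).trans_lt' EReal.bot_lt_zero).ne'
  rw [EnVal_eq_iInf] at hne ⊢
  rw [EReal.iInf_add _ hne (enatToE_ne_bot _)]
  exact iInf_congr fun σ => EnValOf_modify_add hφ σ v

lemma EnVal_modify_of_eq_top {v : V} (hv : φ v = ⊤) : EnVal (H.modify φ) v = ⊤ :=
  eq_top_iff.2 <| le_iInf fun σ => by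
    obtain ⟨π⟩ : Nonempty ((H.modify φ).PlaysMin σ v) := inferInstance
    have h1 : (H.modify φ).partialEn π.1 1 = ⊤ := by
      rw [partialEn, sum_range_one]
      show toE (modWt H.wt φ (π.1 0) (π.1 1)) = ⊤
      rw [π.2.1, (modWt_eq_top_iff _ _).2 (.inr (.inl hv)), toE_top]
    exact h1 ▸ partialEn_le_EnValOf π 1

end Potential

section Trap

variable {H : Game V (WithTop ℤ)}

lemma EnVal_eq_zero_of_trap (C : Set V)
    (hMin : ∀ u ∈ C, H.isMin u → ∃ u', H.E u u' ∧ H.wt u u' ≤ 0 ∧ u' ∈ C)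
    (hMax : ∀ u ∈ C, ¬ H.isMin u → ∀ u', H.E u u' → H.wt u u' ≤ 0 ∧ u' ∈ C)
    {v : V} (hv : v ∈ C) : EnVal H v = 0 := by
  have hchoice : ∀ u, H.isMin u → ∃ u', H.E u u' ∧ (u ∈ C → H.wt u u' ≤ 0 ∧ u' ∈ C) :=
    fun u hu => by
      by_cases huC : u ∈ C
      · obtain ⟨u', hE, hw, hu'⟩ := hMin u huC hu
        exact ⟨u', hE, fun _ => ⟨hw, hu'⟩⟩
      · obtain ⟨u', hE⟩ := H.nosink u
        exact ⟨u', hE, fun h => absurd h huC⟩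
  choose f hfE hfC using hchoice
  let σ : H.MinStrat := ⟨fun u => if hu : H.isMin u then f u hu else u,
    fun u hu => by simpa only [dif_pos hu] using hfE u hu⟩
  refine le_antisymm ((EnVal_le_EnValOf σ v).trans ?_) (EnVal_nonneg v)
  refine iSup_le fun π => iSup_le fun k => sum_nonpos fun i _ => toE_nonpos ?_
  have hstep : ∀ i, π.1 i ∈ C → H.wt (π.1 i) (π.1 (i + 1)) ≤ 0 ∧ π.1 (i + 1) ∈ C := fun i hi => by
    by_cases hm : H.isMin (π.1 i)
    · have hσ : π.1 (i + 1) = f (π.1 i) hm := (π.2.2.2 i hm).trans (dif_pos hm)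
      exact hσ ▸ hfC _ hm hi
    · exact hMax _ hi hm _ (π.2.2.1 i)
  have hC : ∀ i, π.1 i ∈ C := fun i => by
    induction i with
    | zero => rw [π.2.1]; exact hv
    | succ i ih => exact (hstep i ih).2
  exact (hstep i (hC i)).1

lemma exists_play_wt_nonpos_of_EnPVal_eq_zero {u : V} (h : EnPVal H u = 0) :
    ∃ σ : H.MinStrat, ∀ π : H.PlaysMin σ u, H.wt u (π.1 1) ≤ 0 := by
  obtain ⟨σ, hσ⟩ := ENat.iInf_eq_zero.1 h
  refine ⟨σ, fun π => ?_⟩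
  have h0 : EnP (H.wseq π.1) = 0 := le_antisymm ((le_iSup _ π).trans hσ.le) bot_le
  simpa [wseq, π.2.1] using nonpos_of_EnP_eq_zero h0

lemma exists_wt_nonpos_of_EnPVal_eq_zero {u : V} (h : EnPVal H u = 0) (hu : H.isMin u) :
    ∃ u', H.E u u' ∧ H.wt u u' ≤ 0 := by
  obtain ⟨σ, hσ⟩ := exists_play_wt_nonpos_of_EnPVal_eq_zero h
  obtain ⟨π, hπ⟩ := exists_play_of_edge σ (σ.2 u hu) fun _ => rfl
  exact ⟨σ.1 u, σ.2 u hu, hπ ▸ hσ π⟩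

lemma wt_nonpos_of_EnPVal_eq_zero {u u' : V} (h : EnPVal H u = 0) (hu : ¬ H.isMin u)
    (hE : H.E u u') : H.wt u u' ≤ 0 := by
  obtain ⟨σ, hσ⟩ := exists_play_wt_nonpos_of_EnPVal_eq_zero h
  obtain ⟨π, hπ⟩ := exists_play_of_edge σ hE fun h => absurd h hu
  exact hπ ▸ hσ π

lemma EnVal_modify_eq_zero {φ : V → ℕ∞} (h : ∀ u, φ u ≠ ⊤ → EnPVal (H.modify φ) u = 0)
    {v : V} (hv : φ v ≠ ⊤) : EnVal (H.modify φ) v = 0 := by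
  have hfin : ∀ u u', modWt H.wt φ u u' ≤ 0 → φ u' ≠ ⊤ := fun u u' hw htop => by
    rw [(modWt_eq_top_iff _ _).2 (.inr (.inr htop))] at hw
    exact absurd hw (by simp)
  refine EnVal_eq_zero_of_trap {u | φ u ≠ ⊤} (fun u hu hMin => ?_) (fun u hu hMax u' hE => ?_) hv
  · obtain ⟨u', hE, hw⟩ := exists_wt_nonpos_of_EnPVal_eq_zero (h u hu) hMin
    exact ⟨u', hE, hw, hfin u u' hw⟩
  · have hw := wt_nonpos_of_EnPVal_eq_zero (h u hu) hMax hE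
    exact ⟨hw, hfin u u' hw⟩

end Trap

lemma modWt_zero (w : V → V → WithTop ℤ) : modWt w 0 = w := by
  funext u u'
  induction h : w u u' using WithTop.recTopCoe <;> simp [modWt, h]

lemma modWt_modWt (w : V → V → WithTop ℤ) (φ ψ : V → ℕ∞) :
    modWt (modWt w φ) ψ = modWt w (φ + ψ) := by
  funext u u'
  by_cases htop : w u u' = ⊤ ∨ φ u = ⊤ ∨ φ u' = ⊤ ∨ ψ u = ⊤ ∨ ψ u' = ⊤
  · have h1 : modWt (modWt w φ) ψ u u' = ⊤ := by
      simp only [modWt_eq_top_iff] at htop ⊢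
      tauto
    have h2 : modWt w (φ + ψ) u u' = ⊤ := by
      simp only [modWt_eq_top_iff, Pi.add_apply, ENat.add_eq_top] at htop ⊢
      tauto
    rw [h1, h2]
  · simp only [not_or] at htop
    obtain ⟨hw, hφ, hφ', hψ, hψ'⟩ := htop
    obtain ⟨a, ha⟩ := WithTop.ne_top_iff_exists.1 hw
    simp only [modWt, ← ha, hφ, hφ', hψ, hψ', ENat.add_eq_top, WithTop.coe_ne_top, or_self,
      if_false, WithTop.untopD_coe, Pi.add_apply, ENat.toNat_add hφ hψ, ENat.toNat_add hφ' hψ']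
    congr 1
    push_cast
    ring

lemma modify_zero (H : Game V (WithTop ℤ)) : H.modify 0 = H := by
  simp only [modify, modWt_zero]

lemma modify_modify (H : Game V (WithTop ℤ)) (φ ψ : V → ℕ∞) :
    (H.modify φ).modify ψ = H.modify (φ + ψ) := by
  simp only [modify, modWt_modWt]

lemma eslPhi_succ (L : Game V (WithTop ℤ)) (j : ℕ) :
    eslPhi L (j + 1) = eslPhi L j + EnPVal (esl L j) := by
  funext v
  exact sum_range_succ _ _

lemma esl_eq_modify (L : Game V (WithTop ℤ)) (j : ℕ) : esl L j = L.modify (eslPhi L j) := by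
  induction j with
  | zero =>
    have h0 : eslPhi L 0 = 0 := by funext v; simp [eslPhi]
    rw [h0, modify_zero]
    rfl
  | succ j ih => rw [eslPhi_succ, ← modify_modify, ← ih]; rfl

lemma enatToE_eslPhi_le_EnVal (L : Game V (WithTop ℤ)) (j : ℕ) (v : V) :
    enatToE (eslPhi L j v) ≤ EnVal L v := by
  induction j generalizing v with
  | zero => simpa [eslPhi, enatToE_eq_coe] using EnVal_nonneg v
  | succ j ih =>
    rw [eslPhi_succ, Pi.add_apply, enatToE_add, ← EnVal_modify_add ih v, add_comm,
      esl_eq_modify]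
    exact add_le_add (enatToE_EnPVal_le_EnVal v) le_rfl

end Game

theorem esl_full_correctness_general {V : Type} (G : Game V ℤ) (j : ℕ)
    (h : eslPhi (liftZ G) (j + 1) = eslPhi (liftZ G) j) :
    ∀ v : V,
      (EnVal (liftZ G) v < ⊤ ↔ EnVal (esl (liftZ G) j) v = 0) ∧
      (EnVal (liftZ G) v < ⊤ → EnVal (liftZ G) v = enatToE (eslPhi (liftZ G) j v)) := by
  set L := liftZ G
  rw [esl_eq_modify]
  set Φ := eslPhi L j
  have hfix : ∀ u, Φ u ≠ ⊤ → EnPVal (L.modify Φ) u = 0 := fun u hu => by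
    have hu' := congrFun h u
    rw [eslPhi_succ, Pi.add_apply, esl_eq_modify] at hu'
    exact WithTop.add_left_cancel hu (hu'.trans (add_zero _).symm)
  have hsound : ∀ u, enatToE (Φ u) ≤ EnVal L u := enatToE_eslPhi_le_EnVal L j
  intro v
  by_cases hv : Φ v = ⊤
  · have hL : EnVal L v = ⊤ := top_le_iff.1 (enatToE_top ▸ hv ▸ hsound v)
    simp [hL, EnVal_modify_of_eq_top hv]
  · have h0 : EnVal (L.modify Φ) v = 0 := EnVal_modify_eq_zero hfix hv
    have hL : EnVal L v = enatToE (Φ v) := by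
      rw [← EnVal_modify_add hsound v, h0, zero_add]
    exact ⟨⟨fun _ => h0, fun _ => hL ▸ enatToE_lt_top hv⟩, fun _ => hL⟩

/-- Full correctness of the ESL algorithm: at a fixed point `Φ_{j+1} = Φ_j`, a vertex has finite
energy in `G` iff its energy in `G_j` is `0`, and in that case `En_G(v) = Φ_j(v)`. -/
theorem esl_full_correctness {V : Type} [Fintype V] (G : Game V ℤ) (j : ℕ)
    (h : eslPhi (liftZ G) (j + 1) = eslPhi (liftZ G) j) :
    ∀ v : V,
      (EnVal (liftZ G) v < ⊤ ↔ EnVal (esl (liftZ G) j) v = 0) ∧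
      (EnVal (liftZ G) v < ⊤ → EnVal (liftZ G) v = enatToE (eslPhi (liftZ G) j v)) :=
  esl_full_correctness_general G j h
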